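/- For integers r ≥ 2 and k ≥ 3 and any real z ≥ r - 1/k with z ≥ 3/2, one has z^k + k·z^{k-1}(z - r) ≥ z^k - z^{k-1} > 1. Consequently, h_{k,r} is strictly increasing on [λ_k, ∞), where λ_k > r - 1/k is the maximal real root of h_{k,r}. -/

import Mathlib

noncomputable def h (r k : ℕ) (z : ℝ) : ℝ := z ^ k - ∑ i ∈ Finset.range k, ((r : ℝ) - 1) * z ^ i

/-!
Clearing the denominator, `(z - 1) * h r k z = U z` with `U = hNumer r k`, whose derivative is
`U' z = z ^ k + k z ^ (k - 1) (z - r) = z ^ (k - 1) ((k + 1) z - k r) ≥ z ^ (k - 1) (z - 1)` as soon as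
`z ≥ r - 1 / k`. Hence `U'` is positive and increasing on `[λ, ∞)`. As `U λ = 0`, the mean value
theorem gives `U z ≤ U' z (z - λ) < U' z (z - 1)` for `z > λ`, and this is the sign of
the derivative of `h = U / (z - 1)`.
-/

open Set

lemma sub_le_mul_sub_of_monotoneOn_deriv {f f' : ℝ → ℝ} {a b : ℝ} (hab : a ≤ b)
    (hf : ∀ x ∈ Icc a b, HasDerivAt f (f' x) x) (hf' : MonotoneOn f' (Icc a b)) :
    f b - f a ≤ f' b * (b - a) := by
  rcases hab.eq_or_lt with rfl | hab
  · simp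
  obtain ⟨c, hc, hslope⟩ := exists_hasDerivAt_eq_slope f f' hab
    (fun x hx => (hf x hx).continuousAt.continuousWithinAt)
    (fun x hx => hf x (Ioo_subset_Icc_self hx))
  rw [eq_div_iff (sub_ne_zero.2 hab.ne')] at hslope
  rw [← hslope]
  exact mul_le_mul_of_nonneg_right (hf' (Ioo_subset_Icc_self hc) (right_mem_Icc.2 hab.le) hc.2.le)
    (sub_nonneg.2 hab.le)

section

variable {r k : ℕ} {z : ℝ}

noncomputable def hNumer (r k : ℕ) (z : ℝ) : ℝ := z ^ (k + 1) - r * z ^ k + (r - 1)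

noncomputable def hNumerDeriv (r k : ℕ) (z : ℝ) : ℝ := z ^ k + k * z ^ (k - 1) * (z - r)

lemma sub_one_mul_h (r k : ℕ) (z : ℝ) : (z - 1) * h r k z = hNumer r k z := by
  rw [h, hNumer, ← Finset.mul_sum]
  linear_combination (1 - (r : ℝ)) * geom_sum_mul z k

lemma h_eqOn_hNumer_div (r k : ℕ) : EqOn (h r k) (fun z => hNumer r k z / (z - 1)) (Ioi 1) :=
  fun z hz => by
    show h r k z = hNumer r k z / (z - 1)
    rw [← sub_one_mul_h r k z, mul_div_cancel_left₀ _ (sub_ne_zero.2 (ne_of_gt hz))]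

lemma hNumerDeriv_eq (hk : 0 < k) (z : ℝ) :
    hNumerDeriv r k z = z ^ (k - 1) * ((k + 1) * z - k * r) := by
  obtain ⟨n, rfl⟩ : ∃ n, k = n + 1 := ⟨k - 1, by omega⟩
  simp only [hNumerDeriv, Nat.add_sub_cancel, pow_succ]
  ring

lemma hasDerivAt_hNumer (hk : 0 < k) (z : ℝ) : HasDerivAt (hNumer r k) (hNumerDeriv r k z) z := by
  have hd : HasDerivAt (fun x : ℝ => x ^ (k + 1) - r * x ^ k + (r - 1))
      (((k + 1 : ℕ) : ℝ) * z ^ k - r * (k * z ^ (k - 1))) z := by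
    simpa using ((hasDerivAt_pow (k + 1) z).sub ((hasDerivAt_pow k z).const_mul (r : ℝ))).add_const
      ((r : ℝ) - 1)
  refine hd.congr_deriv ?_
  rw [hNumerDeriv_eq hk]
  obtain ⟨n, rfl⟩ : ∃ n, k = n + 1 := ⟨k - 1, by omega⟩
  simp only [Nat.add_sub_cancel, pow_succ]
  push_cast
  ring

lemma sub_one_le_succ_mul_sub (hk : 0 < k) (hz : (r : ℝ) - 1 / k ≤ z) :
    z - 1 ≤ (k + 1) * z - k * r := by
  have hk' : (0 : ℝ) < k := Nat.cast_pos.2 hk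
  have := mul_le_mul_of_nonneg_left hz hk'.le
  rw [mul_sub, mul_one_div_cancel hk'.ne'] at this
  linarith

lemma pow_sub_pow_pred_le_hNumerDeriv (hk : 0 < k) (hz0 : 0 ≤ z) (hz : (r : ℝ) - 1 / k ≤ z) :
    z ^ k - z ^ (k - 1) ≤ hNumerDeriv r k z := by
  have hpow : z ^ k = z ^ (k - 1) * z := by rw [← pow_succ, Nat.sub_add_cancel hk]
  rw [hNumerDeriv_eq hk, hpow, ← mul_sub_one]
  exact mul_le_mul_of_nonneg_left (sub_one_le_succ_mul_sub hk hz) (pow_nonneg hz0 _)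

lemma hNumerDeriv_pos (hk : 0 < k) (hz1 : 1 < z) (hz : (r : ℝ) - 1 / k ≤ z) :
    0 < hNumerDeriv r k z := by
  rw [hNumerDeriv_eq hk]
  have := sub_one_le_succ_mul_sub hk hz
  exact mul_pos (pow_pos (by linarith) _) (by linarith)

lemma monotoneOn_hNumerDeriv {a : ℝ} (hk : 0 < k) (ha1 : 1 ≤ a) (ha : (r : ℝ) - 1 / k ≤ a) :
    MonotoneOn (hNumerDeriv r k) (Ici a) := by
  intro x hx y hy hxy
  simp only [mem_Ici] at hx hy
  rw [hNumerDeriv_eq hk, hNumerDeriv_eq hk]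
  have hx' := sub_one_le_succ_mul_sub hk (ha.trans hx)
  exact mul_le_mul (pow_le_pow_left₀ (by linarith) hxy _) (by gcongr) (by linarith)
    (pow_nonneg (by linarith) _)

lemma hNumer_lt_hNumerDeriv_mul_sub_one {lam : ℝ} (hk : 0 < k) (hroot : h r k lam = 0)
    (hlam1 : 1 < lam) (hlam : (r : ℝ) - 1 / k ≤ lam) (hz : lam < z) :
    hNumer r k z < hNumerDeriv r k z * (z - 1) := by
  have hzero : hNumer r k lam = 0 := by rw [← sub_one_mul_h, hroot, mul_zero]
  have hmvt := sub_le_mul_sub_of_monotoneOn_deriv hz.le (fun x _ => hasDerivAt_hNumer hk x)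
    ((monotoneOn_hNumerDeriv hk hlam1.le hlam).mono Icc_subset_Ici_self)
  have hpos := hNumerDeriv_pos hk (hlam1.trans hz) (hlam.trans hz.le)
  rw [hzero, sub_zero] at hmvt
  exact hmvt.trans_lt (mul_lt_mul_of_pos_left (by linarith) hpos)

theorem strictMonoOn_h {lam : ℝ} (hk : 0 < k) (hroot : h r k lam = 0) (hlam1 : 1 < lam)
    (hlam : (r : ℝ) - 1 / k ≤ lam) : StrictMonoOn (h r k) (Ici lam) := by
  refine StrictMonoOn.congr ?_ ((h_eqOn_hNumer_div r k).mono (Ici_subset_Ioi.2 hlam1)).symm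
  have hne : ∀ z ∈ Ici lam, z - 1 ≠ 0 := fun z hz => sub_ne_zero.2 (hlam1.trans_le hz).ne'
  refine strictMonoOn_of_hasDerivWithinAt_pos (convex_Ici lam) ?_
    (fun z hz => (((hasDerivAt_hNumer hk z).div ((hasDerivAt_id' z).sub_const 1)
      (hne z (interior_subset hz))).hasDerivWithinAt)) (fun z hz => ?_)
  · exact fun z hz => ((hasDerivAt_hNumer hk z).continuousAt.div (by fun_prop)
      (hne z hz)).continuousWithinAt
  · rw [interior_Ici, mem_Ioi] at hz
    have := hNumer_lt_hNumerDeriv_mul_sub_one hk hroot hlam1 hlam hz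
    exact div_pos (by linarith) (pow_pos (by linarith) 2)

end

lemma one_lt_pow_sub_pow_pred {k : ℕ} {z : ℝ} (hk : 3 ≤ k) (hz : 3 / 2 ≤ z) :
    1 < z ^ k - z ^ (k - 1) := by
  obtain ⟨n, rfl⟩ : ∃ n, k = n + 3 := ⟨k - 3, by omega⟩
  have hpow : 9 / 4 ≤ z ^ (n + 2) := calc
    (9 / 4 : ℝ) = (3 / 2) ^ 2 := by norm_num
    _ ≤ (3 / 2) ^ (n + 2) := pow_le_pow_right₀ (by norm_num) (by omega)
    _ ≤ z ^ (n + 2) := pow_le_pow_left₀ (by norm_num) hz _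
  have hfac : z ^ (n + 3) - z ^ (n + 3 - 1) = z ^ (n + 2) * (z - 1) := by
    rw [show n + 3 - 1 = n + 2 by omega, pow_succ]; ring
  rw [hfac]
  nlinarith

theorem stmt7 (r k : ℕ) (hr : 2 ≤ r) (hk : 3 ≤ k) :
    (∀ z : ℝ, (r : ℝ) - 1 / k ≤ z → (3 : ℝ) / 2 ≤ z →
      z ^ k - z ^ (k - 1) ≤ z ^ k + k * z ^ (k - 1) * (z - r) ∧
        1 < z ^ k - z ^ (k - 1)) ∧
      (∀ lam : ℝ, IsGreatest {z : ℝ | h r k z = 0} lam → (r : ℝ) - 1 / k < lam →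
        StrictMonoOn (h r k) (Set.Ici lam)) := by
  refine ⟨fun z hz hz32 => ⟨pow_sub_pow_pred_le_hNumerDeriv (by omega) (by linarith) hz,
    one_lt_pow_sub_pow_pred hk hz32⟩, fun lam hlam hgt => ?_⟩
  have hinv : 1 / (k : ℝ) ≤ 1 / 3 := by gcongr; exact_mod_cast hk
  have hr' : (2 : ℝ) ≤ r := by exact_mod_cast hr
  exact strictMonoOn_h (by omega) hlam.1 (by linarith) hgt.le
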